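/- arXiv:1602.04396 — 4 statements merged into one kernel-verified Lean document; each statement's English description precedes it below -/
import Mathlib

section
/- Let Ω_U ⊆ σB(n₁×r) and Ω_V ⊆ σB(n₂×r) be nonempty subsets of the balls of radius σ (in Frobenius norm) in the spaces of n₁×r and n₂×r real matrices respectively. If Ω_B ⊆ {U Vᵀ : U ∈ Ω_U, V ∈ Ω_V}, then for every ρ > 0 the covering number satisfies N_{Ω_B}(ρ) ≤ N_{Ω_U}(ρ/(2σ)) · N_{Ω_V}(ρ/(2σ)). -/
open Matrix

noncomputable def coveringNumber {E : Type*} [PseudoMetricSpace E] (Ω : Set E) (ρ : ℝ) : ℕ :=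
  sInf {k : ℕ | ∃ C : Finset E, C.card = k ∧ Ω ⊆ ⋃ c ∈ C, Metric.closedBall c ρ}

attribute [local instance] Matrix.frobeniusNormedAddCommGroup

attribute [local instance] Matrix.frobeniusNormedSpace

/-! Cover `ΩU` and `ΩV` by `ε`-balls, `ε = ρ / (2σ)`. Replacing each centre of the `ΩU`-cover by its
metric projection onto the convex ball `σB` keeps it a cover, since that projection does not move
it away from any point of the ball. For `U`, `V` within `ε` of centres `c`, `d`, with `‖c‖ ≤ σ` and
`‖V‖ ≤ σ`, we get `‖UVᵀ - cdᵀ‖ ≤ ‖U - c‖‖V‖ + ‖c‖‖V - d‖ ≤ 2σε = ρ`, so the products `cdᵀ`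
form a `ρ`-cover of `ΩB`. -/

open Set
open Metric (closedBall mem_closedBall nonempty_closedBall isClosed_closedBall
  ball_subset_closedBall totallyBounded_iff)

theorem Convex.exists_mem_forall_dist_le_dist {F : Type*} [NormedAddCommGroup F]
    [InnerProductSpace ℝ F] {K : Set F} (hK : Convex ℝ K) (hne : K.Nonempty)
    (hcomplete : IsComplete K) (c : F) : ∃ v ∈ K, ∀ u ∈ K, dist u v ≤ dist u c := by
  obtain ⟨v, hvK, hv⟩ := exists_norm_eq_iInf_of_complete_convex hne hcomplete hK c
  have hobtuse := (norm_eq_iInf_iff_real_inner_le_zero hK hvK).1 hv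
  refine ⟨v, hvK, fun u hu => ?_⟩
  have hsq : ‖u - c‖ ^ 2 = ‖u - v‖ ^ 2 - 2 * inner ℝ (u - v) (c - v) + ‖c - v‖ ^ 2 := by
    rw [show u - c = (u - v) - (c - v) by abel, norm_sub_sq_real]
  rw [dist_eq_norm, dist_eq_norm, ← sq_le_sq₀ (norm_nonneg _) (norm_nonneg _), hsq,
    real_inner_comm]
  nlinarith [hobtuse u hu, sq_nonneg ‖c - v‖]

theorem Matrix.exists_mem_closedBall_forall_dist_le_dist {m n : Type*} [Fintype m] [Fintype n]
    {σ : ℝ} (hσ : 0 ≤ σ) (c : Matrix m n ℝ) :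
    ∃ v ∈ closedBall 0 σ, ∀ u ∈ closedBall 0 σ, dist u v ≤ dist u c := by
  -- The Frobenius norm is, by definition, the norm of `PiLp 2 (fun _ ↦ EuclideanSpace ℝ n)`.
  let e : Matrix m n ℝ → PiLp 2 (fun _ : m => EuclideanSpace ℝ n) :=
    fun A => WithLp.toLp 2 fun i => WithLp.toLp 2 (A i)
  obtain ⟨v, hv, hvc⟩ := (convex_closedBall (0 : PiLp 2 (fun _ : m => EuclideanSpace ℝ n)) σ)
    |>.exists_mem_forall_dist_le_dist (nonempty_closedBall.2 hσ) isClosed_closedBall.isComplete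
      (e c)
  exact ⟨fun i => WithLp.ofLp (v i), hv, fun u hu => hvc (e u) hu⟩

section Covers

variable {E : Type*} [PseudoMetricSpace E] {Ω : Set E} {ρ : ℝ}

theorem coveringNumber_le_card {C : Finset E} (h : Ω ⊆ ⋃ c ∈ C, closedBall c ρ) :
    coveringNumber Ω ρ ≤ C.card :=
  Nat.sInf_le ⟨C, rfl, h⟩

theorem TotallyBounded.exists_finset_card_eq_coveringNumber (hΩ : TotallyBounded Ω)
    (hρ : 0 < ρ) :
    ∃ C : Finset E, C.card = coveringNumber Ω ρ ∧ Ω ⊆ ⋃ c ∈ C, closedBall c ρ := by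
  obtain ⟨t, htfin, hcov⟩ := totallyBounded_iff.1 hΩ ρ hρ
  have hcov' : Ω ⊆ ⋃ c ∈ htfin.toFinset, closedBall c ρ :=
    hcov.trans <| iUnion₂_mono' fun c hc => ⟨c, by simpa using hc, ball_subset_closedBall⟩
  exact Nat.sInf_mem (s := {k | ∃ C : Finset E, C.card = k ∧ Ω ⊆ ⋃ c ∈ C, closedBall c ρ})
    ⟨_, _, rfl, hcov'⟩

theorem TotallyBounded.exists_finset_subset_card_le_coveringNumber {K : Set E}
    (hK : ∀ c, ∃ v ∈ K, ∀ u ∈ K, dist u v ≤ dist u c) (hΩK : Ω ⊆ K) (hΩ : TotallyBounded Ω)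
    (hρ : 0 < ρ) : ∃ C : Finset E, ↑C ⊆ K ∧ C.card ≤ coveringNumber Ω ρ ∧
      Ω ⊆ ⋃ c ∈ C, closedBall c ρ := by
  classical
  obtain ⟨C, hCcard, hCcov⟩ := hΩ.exists_finset_card_eq_coveringNumber hρ
  choose π hπK hπ using hK
  refine ⟨C.image π, by simpa [Set.subset_def] using fun c _ => hπK c,
    hCcard ▸ Finset.card_image_le, fun x hx => ?_⟩
  obtain ⟨c, hc, hxc⟩ := mem_iUnion₂.1 (hCcov hx)
  exact mem_iUnion₂.2 ⟨π c, Finset.mem_image_of_mem π hc, (hπ c x (hΩK hx)).trans hxc⟩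

end Covers

theorem Matrix.frobenius_norm_mul_transpose_sub_le {m n r 𝕜 : Type*} [Fintype m] [Fintype n]
    [Fintype r] [RCLike 𝕜] (U C : Matrix m r 𝕜) (V D : Matrix n r 𝕜) :
    ‖U * Vᵀ - C * Dᵀ‖ ≤ ‖U - C‖ * ‖V‖ + ‖C‖ * ‖V - D‖ := by
  have hsplit : U * Vᵀ - C * Dᵀ = (U - C) * Vᵀ + C * (V - D)ᵀ := by
    rw [transpose_sub, Matrix.sub_mul, Matrix.mul_sub]
    abel
  calc ‖U * Vᵀ - C * Dᵀ‖ ≤ ‖(U - C) * Vᵀ‖ + ‖C * (V - D)ᵀ‖ := hsplit ▸ norm_add_le _ _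
    _ ≤ ‖U - C‖ * ‖Vᵀ‖ + ‖C‖ * ‖(V - D)ᵀ‖ :=
      add_le_add (frobenius_norm_mul _ _) (frobenius_norm_mul _ _)
    _ = ‖U - C‖ * ‖V‖ + ‖C‖ * ‖V - D‖ := by
      rw [frobenius_norm_transpose, frobenius_norm_transpose]

theorem Matrix.mul_transpose_subset_iUnion_closedBall {m n r : Type*} [Fintype m] [Fintype n]
    [Fintype r] {ΩU : Set (Matrix m r ℝ)} {ΩV : Set (Matrix n r ℝ)}
    {CU : Finset (Matrix m r ℝ)} {CV : Finset (Matrix n r ℝ)} {σ ε : ℝ}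
    (hVb : ΩV ⊆ closedBall 0 σ) (hCUb : ↑CU ⊆ closedBall (0 : Matrix m r ℝ) σ)
    (hU : ΩU ⊆ ⋃ c ∈ CU, closedBall c ε) (hV : ΩV ⊆ ⋃ d ∈ CV, closedBall d ε) :
    {X | ∃ U ∈ ΩU, ∃ V ∈ ΩV, X = U * Vᵀ} ⊆
      ⋃ Y ∈ Finset.image₂ (fun c d => c * dᵀ) CU CV, closedBall Y (2 * σ * ε) := by
  rintro _ ⟨U, hU', V, hV', rfl⟩
  obtain ⟨c, hc, hUc⟩ := mem_iUnion₂.1 (hU hU')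
  obtain ⟨d, hd, hVd⟩ := mem_iUnion₂.1 (hV hV')
  refine mem_iUnion₂.2 ⟨c * dᵀ, Finset.mem_image₂_of_mem hc hd, ?_⟩
  have hVσ : ‖V‖ ≤ σ := mem_closedBall_zero_iff.1 (hVb hV')
  have hcσ : ‖c‖ ≤ σ := mem_closedBall_zero_iff.1 (hCUb hc)
  rw [mem_closedBall, dist_eq_norm] at hUc hVd ⊢
  calc ‖U * Vᵀ - c * dᵀ‖ ≤ ‖U - c‖ * ‖V‖ + ‖c‖ * ‖V - d‖ :=
        frobenius_norm_mul_transpose_sub_le U c V d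
    _ ≤ ε * σ + σ * ε := by
      have hσ0 : 0 ≤ σ := (norm_nonneg c).trans hcσ
      have hε0 : 0 ≤ ε := (norm_nonneg _).trans hUc
      gcongr
    _ = 2 * σ * ε := by ring

theorem Matrix.totallyBounded_of_subset_closedBall {m n : Type*} [Fintype m] [Fintype n]
    {Ω : Set (Matrix m n ℝ)} {σ : ℝ} (h : Ω ⊆ closedBall 0 σ) : TotallyBounded Ω :=
  (isCompact_closedBall _ σ).totallyBounded.subset h

theorem covering_product_general {n₁ n₂ r : ℕ} (σ : ℝ) (hσ : 0 < σ)
    (ΩU : Set (Matrix (Fin n₁) (Fin r) ℝ)) (ΩV : Set (Matrix (Fin n₂) (Fin r) ℝ))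
    (hUb : ΩU ⊆ Metric.closedBall 0 σ) (hVb : ΩV ⊆ Metric.closedBall 0 σ)
    (ΩB : Set (Matrix (Fin n₁) (Fin n₂) ℝ))
    (hB : ΩB ⊆ {X | ∃ U ∈ ΩU, ∃ V ∈ ΩV, X = U * Vᵀ})
    (ρ : ℝ) (hρ : 0 < ρ) :
    coveringNumber ΩB ρ ≤
      coveringNumber ΩU (ρ / (2 * σ)) * coveringNumber ΩV (ρ / (2 * σ)) := by
  classical
  set ε := ρ / (2 * σ)
  have hε : 0 < ε := by positivity
  obtain ⟨CU, hCUb, hCUcard, hCU⟩ :=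
    (totallyBounded_of_subset_closedBall hUb).exists_finset_subset_card_le_coveringNumber
      (exists_mem_closedBall_forall_dist_le_dist hσ.le) hUb hε
  obtain ⟨CV, hCVcard, hCV⟩ :=
    (totallyBounded_of_subset_closedBall hVb).exists_finset_card_eq_coveringNumber hε
  have hρε : ρ = 2 * σ * ε := (mul_div_cancel₀ ρ (by positivity)).symm
  have hCB := hB.trans (mul_transpose_subset_iUnion_closedBall hVb hCUb hCU hCV)
  calc coveringNumber ΩB ρ ≤ (Finset.image₂ (fun c d => c * dᵀ) CU CV).card :=
        coveringNumber_le_card (hρε ▸ hCB)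
    _ ≤ CU.card * CV.card := Finset.card_image₂_le _ _ _
    _ ≤ coveringNumber ΩU ε * coveringNumber ΩV ε := by rw [hCVcard]; gcongr

/-- covering number of a set of products `U Vᵀ`. -/
theorem covering_product {n₁ n₂ r : ℕ} (σ : ℝ) (hσ : 0 < σ)
    (ΩU : Set (Matrix (Fin n₁) (Fin r) ℝ)) (ΩV : Set (Matrix (Fin n₂) (Fin r) ℝ))
    (hUne : ΩU.Nonempty) (hVne : ΩV.Nonempty)
    (hUb : ΩU ⊆ Metric.closedBall 0 σ) (hVb : ΩV ⊆ Metric.closedBall 0 σ)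
    (ΩB : Set (Matrix (Fin n₁) (Fin n₂) ℝ))
    (hB : ΩB ⊆ {X | ∃ U ∈ ΩU, ∃ V ∈ ΩV, X = U * Vᵀ})
    (ρ : ℝ) (hρ : 0 < ρ) :
    coveringNumber ΩB ρ ≤
      coveringNumber ΩU (ρ / (2 * σ)) * coveringNumber ΩV (ρ / (2 * σ)) :=
  covering_product_general σ hσ ΩU ΩV hUb hVb ΩB hB ρ hρ
end

section
/- Let A ∈ ℝ^{n₁×n₂} be a random matrix uniformly distributed on the Frobenius ball of radius R centered at the origin. If X ∈ ℝ^{n₁×n₂} satisfies ‖X‖_F ≥ ε > 0, then for every δ > 0, P[|⟨A, X⟩| ≤ δ] ≤ 2δ·V_{n₁n₂−1} / (εR·V_{n₁n₂}), where V_d is the volume of the unit ball in ℝ^d. -/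
open Matrix

open MeasureTheory

attribute [local instance] Matrix.frobeniusNormedAddCommGroup

/-- `V_d`: the volume of the unit Euclidean ball in `ℝ^d`. -/
noncomputable def unitBallVol (d : ℕ) : ℝ :=
  (volume (Metric.ball (0 : EuclideanSpace ℝ (Fin d)) 1)).toReal

/-!
Flattening `A ↦ (A i j)` is a measure-preserving isometry from the Frobenius space onto
`ℝ^(n₁ n₂)` that turns `trace (Aᵀ X)` into an inner product, so the claim is about a slab
`|⟪a, x⟫| ≤ δ` in the Euclidean ball `B_R`. A reflection rotates `x / ‖x‖` to the first basis
vector, after which the slab lies in the cylinder `[-δ/ε, δ/ε] × B_R^{d-1}`, of volume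
`(2δ/ε) R^(d-1) V_(d-1)`; divide by `vol B_R = R^d V_d`.
-/

open Metric ProbabilityTheory
open scoped RealInnerProductSpace

theorem measurePreserving_uncurry {ι κ X : Type*} [Fintype ι] [Fintype κ] [MeasurableSpace X]
    (μ : Measure X) [SigmaFinite μ] :
    MeasurePreserving (MeasurableEquiv.curry ι κ X).symm
      (Measure.pi fun _ : ι ↦ Measure.pi fun _ : κ ↦ μ) (Measure.pi fun _ : ι × κ ↦ μ) := by
  refine ⟨MeasurableEquiv.measurable _, (Measure.pi_eq fun s hs ↦ ?_).symm⟩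
  have hbox : (MeasurableEquiv.curry ι κ X).symm ⁻¹' Set.univ.pi s
      = Set.univ.pi fun i ↦ Set.univ.pi fun j ↦ s (i, j) := by
    ext A
    simp [MeasurableEquiv.coe_curry_symm]
  rw [MeasurableEquiv.map_apply, hbox, Measure.pi_pi]
  simp_rw [Measure.pi_pi]
  exact (Fintype.prod_prod_type fun p : ι × κ ↦ μ (s p)).symm

theorem MeasureTheory.MeasurePreserving.cond_preimage {α β : Type*} [MeasurableSpace α]
    [MeasurableSpace β] {μ : Measure α} {ν : Measure β} {e : α ≃ᵐ β}
    (he : MeasurePreserving e μ ν) {s : Set β} (hs : MeasurableSet s) (t : Set β) :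
    μ[e ⁻¹' t | e ⁻¹' s] = ν[t | s] := by
  rw [cond_apply (e.measurable hs), cond_apply hs, ← Set.preimage_inter,
    he.measure_preimage_equiv, he.measure_preimage_equiv]

section

variable {ι κ ν : Type*}

def flattenToEuclidean (e : ι × κ ≃ ν) : (ι → κ → ℝ) ≃ᵐ EuclideanSpace ℝ ν :=
  (MeasurableEquiv.curry ι κ ℝ).symm.trans
    ((MeasurableEquiv.piCongrLeft (fun _ ↦ ℝ) e).trans (MeasurableEquiv.toLp 2 _))

theorem flattenToEuclidean_apply (e : ι × κ ≃ ν) (A : ι → κ → ℝ) (m : ν) :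
    flattenToEuclidean e A m = A (e.symm m).1 (e.symm m).2 := by
  simp only [flattenToEuclidean, MeasurableEquiv.piCongrLeft, MeasurableEquiv.trans_apply,
    MeasurableEquiv.coe_curry_symm, MeasurableEquiv.coe_mk, MeasurableEquiv.toLp_apply,
    Equiv.piCongrLeft_apply_eq_cast, cast_eq, Function.uncurry_def]

theorem measurePreserving_flattenToEuclidean [Fintype ι] [Fintype κ] [Fintype ν]
    (e : ι × κ ≃ ν) :
    MeasurePreserving (flattenToEuclidean e) :=
  (PiLp.volume_preserving_toLp ν).comp
    ((volume_measurePreserving_piCongrLeft _ e).comp (measurePreserving_uncurry volume))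

theorem inner_flattenToEuclidean [Fintype ι] [Fintype κ] [Fintype ν] (e : ι × κ ≃ ν)
    (A B : ι → κ → ℝ) :
    ⟪flattenToEuclidean e A, flattenToEuclidean e B⟫ = trace ((of A)ᵀ * of B) := by
  simp only [PiLp.inner_apply, flattenToEuclidean_apply, RCLike.inner_apply, conj_trivial]
  rw [e.symm.sum_comp (fun p ↦ B p.1 p.2 * A p.1 p.2), Fintype.sum_prod_type]
  simp [trace, mul_apply, Finset.sum_comm (γ := ι), mul_comm]

theorem norm_flattenToEuclidean [Fintype ι] [Fintype κ] [Fintype ν] (e : ι × κ ≃ ν)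
    (A : ι → κ → ℝ) : ‖flattenToEuclidean e A‖ = ‖of A‖ := by
  rw [frobenius_norm_def, EuclideanSpace.norm_eq, Real.sqrt_eq_rpow]
  simp only [flattenToEuclidean_apply, Real.rpow_two, of_apply]
  rw [e.symm.sum_comp (fun p ↦ ‖A p.1 p.2‖ ^ 2), Fintype.sum_prod_type]

end

theorem unitBallVol_pos (d : ℕ) : 0 < unitBallVol d :=
  ENNReal.toReal_pos (measure_ball_pos _ _ one_pos).ne' measure_ball_lt_top.ne

theorem volume_closedBall_eq_unitBallVol (d : ℕ) {R : ℝ} (hR : 0 ≤ R) :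
    volume (closedBall (0 : EuclideanSpace ℝ (Fin d)) R)
      = ENNReal.ofReal (R ^ d * unitBallVol d) := by
  rw [Measure.addHaar_closedBall _ _ hR, ENNReal.ofReal_mul (pow_nonneg hR d), unitBallVol,
    ENNReal.ofReal_toReal measure_ball_lt_top.ne, finrank_euclideanSpace_fin]

theorem norm_toLp_tail_le {k : ℕ} (b : EuclideanSpace ℝ (Fin (k + 1))) :
    ‖WithLp.toLp 2 (Fin.tail b.ofLp)‖ ≤ ‖b‖ := by
  refine (pow_le_pow_iff_left₀ (norm_nonneg _) (norm_nonneg _) two_ne_zero).1 ?_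
  rw [EuclideanSpace.real_norm_sq_eq, EuclideanSpace.real_norm_sq_eq, Fin.sum_univ_succ]
  exact le_add_of_nonneg_left (sq_nonneg _)

theorem volume_setOf_norm_le_and_abs_apply_zero_le (k : ℕ) (R t : ℝ) :
    volume {b : EuclideanSpace ℝ (Fin (k + 1)) | ‖b‖ ≤ R ∧ |b 0| ≤ t}
      ≤ ENNReal.ofReal (2 * t) * volume (closedBall (0 : EuclideanSpace ℝ (Fin k)) R) := by
  let g := (MeasurableEquiv.toLp 2 (Fin (k + 1) → ℝ)).symm.trans
    (MeasurableEquiv.piFinSuccAbove (fun _ ↦ ℝ) 0)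
  have hg : MeasurePreserving g :=
    (volume_preserving_piFinSuccAbove (fun _ ↦ ℝ) 0).comp (PiLp.volume_preserving_ofLp _)
  have hsub : {b : EuclideanSpace ℝ (Fin (k + 1)) | ‖b‖ ≤ R ∧ |b 0| ≤ t}
      ⊆ g ⁻¹' (Set.Icc (-t) t ×ˢ (WithLp.toLp 2 ⁻¹' closedBall 0 R)) := by
    rintro b ⟨hbR, hbt⟩
    refine ⟨abs_le.1 hbt, ?_⟩
    simpa [g] using (norm_toLp_tail_le b).trans hbR
  calc _ ≤ volume (g ⁻¹' (Set.Icc (-t) t ×ˢ (WithLp.toLp 2 ⁻¹' closedBall 0 R))) :=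
        measure_mono hsub
    _ = ENNReal.ofReal (2 * t) * volume (closedBall (0 : EuclideanSpace ℝ (Fin k)) R) := by
      rw [hg.measure_preimage_equiv, Measure.volume_eq_prod, Measure.prod_prod, Real.volume_Icc,
        (PiLp.volume_preserving_toLp _).measure_preimage measurableSet_closedBall.nullMeasurableSet]
      ring_nf

theorem volume_setOf_norm_le_and_abs_inner_le_congr {E : Type*} [NormedAddCommGroup E]
    [InnerProductSpace ℝ E] [FiniteDimensional ℝ E] [MeasurableSpace E] [BorelSpace E]
    {u v : E} (huv : ‖u‖ = ‖v‖) (R t : ℝ) :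
    volume {a : E | ‖a‖ ≤ R ∧ |⟪a, u⟫| ≤ t} = volume {a : E | ‖a‖ ≤ R ∧ |⟪a, v⟫| ≤ t} := by
  let f := (Submodule.reflection (ℝ ∙ (u - v))ᗮ).toMeasurableEquiv
  have hfu : f u = v := Submodule.reflection_sub huv
  have hpre : {a : E | ‖a‖ ≤ R ∧ |⟪a, u⟫| ≤ t} = f ⁻¹' {a | ‖a‖ ≤ R ∧ |⟪a, v⟫| ≤ t} := by
    ext a
    change _ ↔ ‖f a‖ ≤ R ∧ |⟪f a, v⟫| ≤ t
    rw [← hfu]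
    simp only [f, LinearIsometryEquiv.coe_toMeasurableEquiv, LinearIsometryEquiv.norm_map,
      LinearIsometryEquiv.inner_map_map, Set.mem_ofPred_eq]
  rw [hpre, (LinearIsometryEquiv.measurePreserving _).measure_preimage_equiv]

theorem setOf_abs_inner_le_subset {E : Type*} [NormedAddCommGroup E] [InnerProductSpace ℝ E]
    {x : E} {ε δ : ℝ} (hε : 0 < ε) (hx : ε ≤ ‖x‖) :
    {a : E | |⟪a, x⟫| ≤ δ} ⊆ {a | |⟪a, ‖x‖⁻¹ • x⟫| ≤ δ / ε} := by
  intro a ha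
  have hδ : 0 ≤ δ := (abs_nonneg _).trans ha
  calc |⟪a, ‖x‖⁻¹ • x⟫| = |⟪a, x⟫| / ‖x‖ := by
        rw [real_inner_smul_right, abs_mul, abs_inv, abs_norm, inv_mul_eq_div]
    _ ≤ δ / ‖x‖ := by gcongr; exact ha
    _ ≤ δ / ε := div_le_div_of_nonneg_left hδ hε hx

theorem volume_closedBall_inter_setOf_abs_inner_le {k : ℕ} {R ε δ : ℝ} (hε : 0 < ε)
    {x : EuclideanSpace ℝ (Fin (k + 1))} (hx : ε ≤ ‖x‖) :
    volume (closedBall 0 R ∩ {a | |⟪a, x⟫| ≤ δ})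
      ≤ ENNReal.ofReal (2 * (δ / ε)) * volume (closedBall (0 : EuclideanSpace ℝ (Fin k)) R) := by
  have hx₀ : ‖x‖ ≠ 0 := (hε.trans_le hx).ne'
  have hunit : ‖‖x‖⁻¹ • x‖ = ‖EuclideanSpace.single (0 : Fin (k + 1)) (1 : ℝ)‖ := by
    rw [norm_smul, norm_inv, norm_norm, inv_mul_cancel₀ hx₀, PiLp.norm_single, norm_one]
  calc volume (closedBall 0 R ∩ {a | |⟪a, x⟫| ≤ δ})
      ≤ volume {a : EuclideanSpace ℝ (Fin (k + 1)) | ‖a‖ ≤ R ∧ |⟪a, ‖x‖⁻¹ • x⟫| ≤ δ / ε} :=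
        measure_mono fun a ⟨haR, hax⟩ ↦
          ⟨mem_closedBall_zero_iff.1 haR, setOf_abs_inner_le_subset hε hx hax⟩
    _ = volume {b : EuclideanSpace ℝ (Fin (k + 1)) | ‖b‖ ≤ R ∧ |b 0| ≤ δ / ε} := by
        rw [volume_setOf_norm_le_and_abs_inner_le_congr hunit]
        simp [EuclideanSpace.inner_single_right]
    _ ≤ _ := volume_setOf_norm_le_and_abs_apply_zero_le k R (δ / ε)

theorem cond_closedBall_setOf_abs_inner_le {d : ℕ} {R ε δ : ℝ} (hR : 0 < R) (hε : 0 < ε)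
    {x : EuclideanSpace ℝ (Fin d)} (hx : ε ≤ ‖x‖) :
    volume[{a | |⟪a, x⟫| ≤ δ} | closedBall 0 R]
      ≤ ENNReal.ofReal (2 * δ * unitBallVol (d - 1) / (ε * R * unitBallVol d)) := by
  cases d with
  | zero =>
    rw [Subsingleton.elim x 0, norm_zero] at hx
    exact absurd hε hx.not_gt
  | succ k =>
    have hV := unitBallVol_pos (k + 1)
    have hV' := unitBallVol_pos k
    rw [Nat.add_sub_cancel, cond_apply measurableSet_closedBall,
      volume_closedBall_eq_unitBallVol _ hR.le, ← ENNReal.ofReal_inv_of_pos (by positivity)]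
    calc _ ≤ ENNReal.ofReal (R ^ (k + 1) * unitBallVol (k + 1))⁻¹
          * (ENNReal.ofReal (2 * (δ / ε)) * volume (closedBall (0 : EuclideanSpace ℝ (Fin k)) R)) :=
          by gcongr; exact volume_closedBall_inter_setOf_abs_inner_le hε hx
      _ = _ := by
          rw [volume_closedBall_eq_unitBallVol k hR.le, ← ENNReal.ofReal_mul' (by positivity),
            ← ENNReal.ofReal_mul (by positivity)]
          congr 1
          field_simp
          ring

theorem uniform_matrix_concentration_general {n₁ n₂ : ℕ} (R ε δ : ℝ)
    (hR : 0 < R) (hε : 0 < ε)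
    (X : Matrix (Fin n₁) (Fin n₂) ℝ) (hX : ε ≤ ‖X‖) :
    ((volume {A : Fin n₁ → Fin n₂ → ℝ | ‖Matrix.of A‖ ≤ R})⁻¹ •
        volume.restrict {A : Fin n₁ → Fin n₂ → ℝ | ‖Matrix.of A‖ ≤ R})
      {A : Fin n₁ → Fin n₂ → ℝ | |Matrix.trace ((Matrix.of A)ᵀ * X)| ≤ δ}
      ≤ ENNReal.ofReal
          (2 * δ * unitBallVol (n₁ * n₂ - 1) / (ε * R * unitBallVol (n₁ * n₂))) := by
  let e := flattenToEuclidean finProdFinEquiv (ι := Fin n₁) (κ := Fin n₂)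
  have hball : {A : Fin n₁ → Fin n₂ → ℝ | ‖Matrix.of A‖ ≤ R} = e ⁻¹' closedBall 0 R := by
    ext A
    simp only [Set.mem_preimage, mem_closedBall_zero_iff, e, norm_flattenToEuclidean,
      Set.mem_ofPred_eq]
  have hslab : {A : Fin n₁ → Fin n₂ → ℝ | |Matrix.trace ((Matrix.of A)ᵀ * X)| ≤ δ}
      = e ⁻¹' {a | |⟪a, e X⟫| ≤ δ} := by
    ext A
    exact (congrArg (|·| ≤ δ) (inner_flattenToEuclidean _ A X)).to_iff.symm
  change ProbabilityTheory.cond volume _ _ ≤ _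
  rw [hslab, hball, (measurePreserving_flattenToEuclidean _).cond_preimage measurableSet_closedBall]
  exact cond_closedBall_setOf_abs_inner_le hR hε (hX.trans_eq (norm_flattenToEuclidean _ X).symm)

/-- concentration bound for `A` uniform on the Frobenius ball of radius `R`. -/
theorem uniform_matrix_concentration {n₁ n₂ : ℕ} (R ε δ : ℝ)
    (hR : 0 < R) (hε : 0 < ε) (hδ : 0 < δ)
    (X : Matrix (Fin n₁) (Fin n₂) ℝ) (hX : ε ≤ ‖X‖) :
    ((volume {A : Fin n₁ → Fin n₂ → ℝ | ‖Matrix.of A‖ ≤ R})⁻¹ •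
        volume.restrict {A : Fin n₁ → Fin n₂ → ℝ | ‖Matrix.of A‖ ≤ R})
      {A : Fin n₁ → Fin n₂ → ℝ | |Matrix.trace ((Matrix.of A)ᵀ * X)| ≤ δ}
      ≤ ENNReal.ofReal
          (2 * δ * unitBallVol (n₁ * n₂ - 1) / (ε * R * unitBallVol (n₁ * n₂))) :=
  uniform_matrix_concentration_general R ε δ hR hε X hX
end

section
/- Let a ∈ ℝⁿ have i.i.d. Gaussian N(0,σ²) entries. If X ∈ ℝ^{n×n} is symmetric with ‖X‖₂ ≥ ε > 0, then for every δ > 0, P[|aᵀ X a| ≤ δ] ≤ 2√δ / (√(πε) σ). -/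
/-!
Diagonalize `X` in an orthonormal eigenbasis with eigenvalues `λₖ`. A vector with i.i.d.
`N(0, σ²)` coordinates has an orthogonally invariant law, so `aᵀ X a` has the law of
`∑ₖ λₖ aₖ²`. Pick `k` with `|λₖ| ≥ ‖X‖₂ ≥ ε` and condition on the other coordinates: the set of
`u` with `|λₖ u² + c| ≤ δ` has Lebesgue measure at most `2 √(2δ / |λₖ|)`, and the density of
`N(0, σ²)` is at most `1 / (√(2π) σ)`.
-/

open Matrix

open MeasureTheory ProbabilityTheory Real
open scoped ENNReal NNReal RealInnerProductSpace

/-- The spectral norm (largest singular value) of a matrix. -/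
noncomputable def matSpectralNorm {n₁ n₂ : ℕ} (X : Matrix (Fin n₁) (Fin n₂) ℝ) : ℝ :=
  ‖LinearMap.toContinuousLinearMap (Matrix.toEuclideanLin X)‖

-- No sign conditions are needed since `√x = 0` for `x ≤ 0`.
theorem Real.sqrt_add_le_sqrt_sub_add_sqrt_two_mul (a r : ℝ) :
    √(a + r) ≤ √(a - r) + √(2 * r) := by
  rw [Real.sqrt_le_iff]
  refine ⟨by positivity, ?_⟩
  nlinarith [Real.sq_sqrt' (x := a - r), Real.sq_sqrt' (x := 2 * r), le_max_left (a - r) 0,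
    le_max_left (2 * r) 0, le_max_right (a - r) 0, le_max_right (2 * r) 0,
    mul_nonneg (Real.sqrt_nonneg (a - r)) (Real.sqrt_nonneg (2 * r))]

theorem volume_setOf_abs_sq_sub_le (a r : ℝ) :
    volume {u : ℝ | |u ^ 2 - a| ≤ r} ≤ ENNReal.ofReal (2 * √(2 * r)) := by
  set s := √(a - r)
  set t := √(a + r)
  have hsub : {u : ℝ | |u ^ 2 - a| ≤ r} ⊆ Set.Icc (-t) (-s) ∪ Set.Icc s t := by
    intro u (hu : |u ^ 2 - a| ≤ r)
    obtain ⟨hlo, hhi⟩ := abs_le.mp hu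
    have hs : s ≤ |u| := by
      rw [← Real.sqrt_sq_eq_abs]
      exact Real.sqrt_le_sqrt (by linarith)
    have ht : |u| ≤ t := Real.abs_le_sqrt (by linarith)
    rcases le_or_gt 0 u with hu0 | hu0
    · rw [abs_of_nonneg hu0] at hs ht
      exact Or.inr ⟨hs, ht⟩
    · rw [abs_of_neg hu0] at hs ht
      exact Or.inl ⟨by linarith, by linarith⟩
  have hts : t - s ≤ √(2 * r) := by
    linarith [Real.sqrt_add_le_sqrt_sub_add_sqrt_two_mul a r]
  calc volume {u : ℝ | |u ^ 2 - a| ≤ r}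
      ≤ volume (Set.Icc (-t) (-s)) + volume (Set.Icc s t) :=
        (measure_mono hsub).trans (measure_union_le _ _)
    _ = ENNReal.ofReal (t - s) + ENNReal.ofReal (t - s) := by
        rw [Real.volume_Icc, Real.volume_Icc, neg_sub_neg]
    _ ≤ ENNReal.ofReal √(2 * r) + ENNReal.ofReal √(2 * r) := by gcongr
    _ = ENNReal.ofReal (2 * √(2 * r)) := by
        rw [← ENNReal.ofReal_add (Real.sqrt_nonneg _) (Real.sqrt_nonneg _), ← two_mul]

theorem gaussianReal_le_mul_volume (μ : ℝ) {v : ℝ≥0} (hv : v ≠ 0) (s : Set ℝ) :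
    gaussianReal μ v s ≤ ENNReal.ofReal (√(2 * π * v))⁻¹ * volume s := by
  have hpdf (x : ℝ) : gaussianPDF μ v x ≤ ENNReal.ofReal (√(2 * π * v))⁻¹ := by
    refine ENNReal.ofReal_le_ofReal ?_
    rw [gaussianPDFReal_def]
    refine mul_le_of_le_one_right (by positivity) (Real.exp_le_one_iff.mpr ?_)
    exact div_nonpos_of_nonpos_of_nonneg (neg_nonpos.mpr (sq_nonneg _)) (by positivity)
  rw [gaussianReal_of_var_ne_zero μ hv, withDensity_apply' _ s]
  exact (setLIntegral_mono measurable_const fun x _ => hpdf x).trans_eq (setLIntegral_const _ _)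

theorem gaussianReal_setOf_abs_mul_sq_add_le {v : ℝ≥0} (hv : v ≠ 0) {l : ℝ} (hl : l ≠ 0)
    (c δ : ℝ) :
    gaussianReal 0 v {u | |l * u ^ 2 + c| ≤ δ} ≤ ENNReal.ofReal (2 * √(δ / (π * |l| * v))) := by
  have hl' : 0 < |l| := abs_pos.mpr hl
  have hset : {u | |l * u ^ 2 + c| ≤ δ} = {u : ℝ | |u ^ 2 - (-c / l)| ≤ δ / |l|} := by
    ext u
    show |l * u ^ 2 + c| ≤ δ ↔ |u ^ 2 - (-c / l)| ≤ δ / |l|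
    rw [le_div_iff₀ hl', ← abs_mul, show (u ^ 2 - -c / l) * l = l * u ^ 2 + c by field_simp; ring]
  calc gaussianReal 0 v {u | |l * u ^ 2 + c| ≤ δ}
      ≤ ENNReal.ofReal (√(2 * π * v))⁻¹ * ENNReal.ofReal (2 * √(2 * (δ / |l|))) := by
        rw [hset]
        exact (gaussianReal_le_mul_volume 0 hv _).trans
          (by gcongr; exact volume_setOf_abs_sq_sub_le _ _)
    _ = ENNReal.ofReal (2 * √(δ / (π * |l| * v))) := by
        rw [← ENNReal.ofReal_mul (by positivity), ← Real.sqrt_inv, mul_left_comm,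
          ← Real.sqrt_mul (by positivity)]
        congr 3
        field_simp

theorem MeasureTheory.Measure.pi_le_of_forall_update_le {ι : Type*} [Fintype ι] [DecidableEq ι]
    {X : ι → Type*} [∀ i, MeasurableSpace (X i)] (μ : ∀ i, Measure (X i))
    [∀ i, IsProbabilityMeasure (μ i)] (i : ι) {S : Set (∀ i, X i)} (hS : MeasurableSet S)
    {C : ℝ≥0∞} (hC : ∀ x, μ i {t | Function.update x i t ∈ S} ≤ C) :
    Measure.pi μ S ≤ C := by
  have hslice : ∫⋯∫⁻_{i}, S.indicator 1 ∂μ ≤ ∫⋯∫⁻_{i}, (fun _ => C) ∂μ := fun x => by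
    simp only [lmarginal_singleton, lintegral_const, measure_univ, mul_one]
    change ∫⁻ t, (Function.update x i ⁻¹' S).indicator 1 t ∂μ i ≤ C
    rw [lintegral_indicator_one (measurable_update x hS)]
    exact hC x
  calc Measure.pi μ S = ∫⁻ x, S.indicator 1 x ∂Measure.pi μ := (lintegral_indicator_one hS).symm
    _ ≤ ∫⁻ _, C ∂Measure.pi μ :=
        lintegral_le_of_lmarginal_le {i} (measurable_one.indicator hS) measurable_const hslice
    _ = C := by simp

theorem pi_gaussianReal_setOf_abs_sum_mul_sq_le {ι : Type*} [Fintype ι] [DecidableEq ι]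
    {v : ℝ≥0} (hv : v ≠ 0) (l : ι → ℝ) {k : ι} (hk : l k ≠ 0) (δ : ℝ) :
    Measure.pi (fun _ : ι => gaussianReal 0 v) {x | |∑ j, l j * x j ^ 2| ≤ δ}
      ≤ ENNReal.ofReal (2 * √(δ / (π * |l k| * v))) := by
  refine Measure.pi_le_of_forall_update_le _ k (measurableSet_le (by fun_prop) measurable_const)
    fun x => ?_
  have hslice : {t | Function.update x k t ∈ {x : ι → ℝ | |∑ j, l j * x j ^ 2| ≤ δ}}
      = {t | |l k * t ^ 2 + ∑ j ∈ Finset.univ.erase k, l j * x j ^ 2| ≤ δ} := by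
    ext t
    show |∑ j, l j * Function.update x k t j ^ 2| ≤ δ ↔ _
    rw [← Finset.add_sum_erase _ _ (Finset.mem_univ k), Function.update_self,
      Finset.sum_congr rfl fun j hj => by rw [Function.update_of_ne (Finset.ne_of_mem_erase hj)]]
    rfl
  rw [hslice]
  exact gaussianReal_setOf_abs_mul_sq_add_le hv hk _ δ

theorem pi_gaussianReal_eq_map_const_mul {ι : Type*} [Fintype ι] (v : ℝ≥0) :
    Measure.pi (fun _ : ι => gaussianReal 0 v)
      = (Measure.pi fun _ : ι => gaussianReal 0 1).map (fun x i => √v * x i) := by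
  rw [Measure.pi_map_pi (fun _ => (measurable_const_mul _).aemeasurable)]
  congr with i : 1
  rw [gaussianReal_map_const_mul, mul_zero, mul_one]
  congr
  ext
  simp

theorem map_pi_gaussianReal_orthonormalBasis {ι : Type*} [Fintype ι]
    (b : OrthonormalBasis ι ℝ (EuclideanSpace ℝ ι)) :
    (Measure.pi fun _ : ι => gaussianReal 0 1).map (fun x => (∑ i, x i • b i).ofLp)
      = Measure.pi fun _ : ι => gaussianReal 0 1 := by
  have h := congrArg (Measure.map WithLp.ofLp) (map_pi_eq_stdGaussian (ι := ι))
  rw [stdGaussian_eq_map_pi_orthonormalBasis b, Measure.map_map (by fun_prop) (by fun_prop),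
    Measure.map_map (by fun_prop) (by fun_prop)] at h
  simpa [Function.comp_def] using h.symm

theorem measurePreserving_pi_gaussianReal_orthonormalBasis {ι : Type*} [Fintype ι] (v : ℝ≥0)
    (b : OrthonormalBasis ι ℝ (EuclideanSpace ℝ ι)) :
    MeasurePreserving (fun x => (∑ i, x i • b i).ofLp)
      (Measure.pi fun _ : ι => gaussianReal 0 v) (Measure.pi fun _ : ι => gaussianReal 0 v) := by
  refine ⟨by fun_prop, ?_⟩
  have hcomm : ((fun x => (∑ i, x i • b i).ofLp) ∘ fun x i => √v * x i)
      = (fun x i => √v * x i) ∘ (fun x : ι → ℝ => (∑ i, x i • b i).ofLp) := by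
    ext x j
    simp [Finset.mul_sum, mul_assoc]
  rw [pi_gaussianReal_eq_map_const_mul, Measure.map_map (by fun_prop) (by fun_prop), hcomm,
    ← Measure.map_map (by fun_prop) (by fun_prop), map_pi_gaussianReal_orthonormalBasis]

namespace Matrix.IsHermitian

variable {ι : Type*} [Fintype ι] [DecidableEq ι] {A : Matrix ι ι ℝ} (hA : A.IsHermitian)
include hA

theorem dotProduct_mulVec_sum_smul_eigenvectorBasis (x : ι → ℝ) :
    (∑ k, x k • hA.eigenvectorBasis k).ofLp ⬝ᵥ A *ᵥ (∑ k, x k • hA.eigenvectorBasis k).ofLp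
      = ∑ k, hA.eigenvalues k * x k ^ 2 := by
  have hAb : A *ᵥ (∑ k, x k • hA.eigenvectorBasis k).ofLp
      = (∑ k, (hA.eigenvalues k * x k) • hA.eigenvectorBasis k).ofLp := by
    simp [Matrix.mulVec_sum, Matrix.mulVec_smul, hA.mulVec_eigenvectorBasis, smul_smul, mul_comm]
  have hinner (u v : EuclideanSpace ℝ ι) : u.ofLp ⬝ᵥ v.ofLp = ⟪u, v⟫ := dotProduct_comm _ _
  rw [hAb, hinner]
  simp [hA.eigenvectorBasis.orthonormal.inner_sum, sq, mul_left_comm]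

theorem abs_inner_toEuclideanLin_self_le (z : EuclideanSpace ℝ ι) :
    |⟪Matrix.toEuclideanLin A z, z⟫| ≤ (⨆ k, |hA.eigenvalues k|) * ‖z‖ ^ 2 := by
  set c := hA.eigenvectorBasis.repr z
  have hz : z = ∑ k, c k • hA.eigenvectorBasis k := (hA.eigenvectorBasis.sum_repr z).symm
  have hquad : ⟪Matrix.toEuclideanLin A z, z⟫ = ∑ k, hA.eigenvalues k * c k ^ 2 := by
    rw [← hA.dotProduct_mulVec_sum_smul_eigenvectorBasis, ← hz]
    rfl
  calc |⟪Matrix.toEuclideanLin A z, z⟫| ≤ ∑ k, |hA.eigenvalues k| * c k ^ 2 := by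
        rw [hquad]
        refine (Finset.abs_sum_le_sum_abs _ _).trans_eq ?_
        simp [abs_mul]
    _ ≤ ∑ k, (⨆ k, |hA.eigenvalues k|) * c k ^ 2 := by
        gcongr with k
        exact le_ciSup (f := fun k => |hA.eigenvalues k|) (Finite.bddAbove_range _) k
    _ = (⨆ k, |hA.eigenvalues k|) * ‖z‖ ^ 2 := by
        rw [← Finset.mul_sum, ← hA.eigenvectorBasis.repr.norm_map, EuclideanSpace.real_norm_sq_eq]

end Matrix.IsHermitian

theorem Matrix.IsHermitian.matSpectralNorm_le_iSup_abs_eigenvalues {n : ℕ}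
    {A : Matrix (Fin n) (Fin n) ℝ} (hA : A.IsHermitian) : matSpectralNorm A ≤ ⨆ k, |hA.eigenvalues k| := by
  rw [matSpectralNorm, ContinuousLinearMap.norm_eq_iSup_rayleighQuotient _
    (isSymmetric_toEuclideanLin_iff.mpr hA)]
  refine ciSup_le fun z => ?_
  rw [ContinuousLinearMap.rayleighQuotient, ContinuousLinearMap.reApplyInnerSelf_apply,
    RCLike.re_to_real, abs_div, abs_pow, abs_norm]
  exact div_le_of_le_mul₀ (by positivity) (Real.iSup_nonneg fun _ => abs_nonneg _)
    (hA.abs_inner_toEuclideanLin_self_le z)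

theorem Matrix.IsHermitian.exists_le_abs_eigenvalues_of_le_matSpectralNorm {n : ℕ}
    {A : Matrix (Fin n) (Fin n) ℝ} (hA : A.IsHermitian) {ε : ℝ} (hε : 0 < ε)
    (h : ε ≤ matSpectralNorm A) : ∃ k, ε ≤ |hA.eigenvalues k| := by
  have hsup := h.trans hA.matSpectralNorm_le_iSup_abs_eigenvalues
  cases isEmpty_or_nonempty (Fin n)
  · rw [Real.iSup_of_isEmpty] at hsup
    exact absurd hsup (not_le.mpr hε)
  · obtain ⟨k, hk⟩ := exists_eq_ciSup_of_finite (f := fun k => |hA.eigenvalues k|)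
    exact ⟨k, hk ▸ hsup⟩

/-- concentration bound for the quadratic form `aᵀXa` with `a` having
i.i.d. Gaussian `N(0,σ²)` entries. -/
theorem gaussian_quadratic_concentration {n : ℕ} (σ ε δ : ℝ)
    (hσ : 0 < σ) (hε : 0 < ε) (hδ : 0 < δ)
    (X : Matrix (Fin n) (Fin n) ℝ) (hsymm : X = Xᵀ) (hX : ε ≤ matSpectralNorm X) :
    (Measure.pi fun _ : Fin n => gaussianReal 0 (Real.toNNReal (σ ^ 2)))
      {a : Fin n → ℝ | |∑ i, ∑ j, a i * X i j * a j| ≤ δ}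
      ≤ ENNReal.ofReal (2 * Real.sqrt δ / (Real.sqrt (π * ε) * σ)) := by
  have hX' : X.IsHermitian := (conjTranspose_eq_transpose_of_trivial X).trans hsymm.symm
  obtain ⟨k, hk⟩ := hX'.exists_le_abs_eigenvalues_of_le_matSpectralNorm hε hX
  have hv : (σ ^ 2).toNNReal ≠ 0 := (Real.toNNReal_pos.mpr (pow_pos hσ 2)).ne'
  have hrot := measurePreserving_pi_gaussianReal_orthonormalBasis (σ ^ 2).toNNReal
    hX'.eigenvectorBasis
  have hpre : (fun x : Fin n → ℝ => (∑ i, x i • hX'.eigenvectorBasis i).ofLp) ⁻¹'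
        {a : Fin n → ℝ | |∑ i, ∑ j, a i * X i j * a j| ≤ δ}
      = {x : Fin n → ℝ | |∑ j, hX'.eigenvalues j * x j ^ 2| ≤ δ} := by
    ext x
    simp only [Set.mem_preimage, Set.mem_ofPred_eq]
    rw [← hX'.dotProduct_mulVec_sum_smul_eigenvectorBasis]
    simp [dotProduct, mulVec, Finset.mul_sum, mul_assoc]
  rw [← hrot.measure_preimage (measurableSet_le (by fun_prop) measurable_const).nullMeasurableSet,
    hpre]
  have hl : hX'.eigenvalues k ≠ 0 := abs_pos.mp (hε.trans_le hk)
  refine (pi_gaussianReal_setOf_abs_sum_mul_sq_le hv _ hl δ).trans (ENNReal.ofReal_le_ofReal ?_)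
  rw [Real.coe_toNNReal _ (sq_nonneg σ)]
  calc 2 * √(δ / (π * |hX'.eigenvalues k| * σ ^ 2)) ≤ 2 * √(δ / (π * ε * σ ^ 2)) := by gcongr
    _ = 2 * √δ / (√(π * ε) * σ) := by
        rw [Real.sqrt_div' _ (by positivity), Real.sqrt_mul' _ (sq_nonneg σ), Real.sqrt_sq hσ.le,
          mul_div_assoc]
end

section
/- Let u, v be independent standard Gaussian random variables and let t > 0. Then P[|uv| ≤ t] ≤ (1 − e^{−t}) + t·∫_t^∞ z^{−1} e^{−z} dz ≤ t(1 + ln(1 + 1/t)). -/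
/-!
In polar coordinates `(u, v) = (r cos θ, r sin θ)` the pair of independent standard Gaussians has
density `r e^{-r²/2} / (2π)` on `(0, ∞) × (-π, π)`, and `|uv| = r² |cos θ sin θ|`. Jordan's
inequality `|sin x| ≥ (2/π) · dist(x, πℤ)` shows that the angles with `|cos θ sin θ| ≤ s` have
measure at most `4πs`, so after the substitution `z = r²/2` the probability is at most
`∫_0^∞ e^{-z} min(1, t/z) dz`. Splitting this at `z = t` gives the first bound. The second follows
from `1 - e^{-t} ≤ t` and `e^{-z} ≤ 1/(z + 1)`, since `1/(z(z + 1)) = 1/z - 1/(z + 1)` integrates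
over `(t, ∞)` to `log(1 + 1/t)`.
-/

open MeasureTheory ProbabilityTheory Set Real Filter
open scoped ENNReal Topology

lemma exists_int_abs_sub_mul_pi_le (x : ℝ) : ∃ k : ℤ, |x - k * π| ≤ π / 2 * |sin x| := by
  refine ⟨round (x / π), ?_⟩
  have hreduced : |x - round (x / π) * π| ≤ π / 2 := by
    have h := abs_sub_round (x / π)
    rw [show x - round (x / π) * π = (x / π - round (x / π)) * π by field_simp, abs_mul,
      abs_of_pos pi_pos]
    nlinarith [pi_pos]
  have hsin : |sin (x - round (x / π) * π)| = |sin x| := by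
    rw [sin_sub_int_mul_pi, abs_mul, abs_neg_one_zpow, one_mul]
  calc |x - round (x / π) * π| = π / 2 * (2 / π * |x - round (x / π) * π|) := by field_simp
    _ ≤ π / 2 * |sin x| := by grw [mul_abs_le_abs_sin hreduced, hsin]

lemma exists_int_abs_sub_mul_pi_div_two_le {θ s : ℝ} (hθ : θ ∈ Ioo (-π) π)
    (hs : |cos θ * sin θ| ≤ s) : ∃ k : ℤ, -2 ≤ k ∧ k ≤ 2 ∧ |θ - k * (π / 2)| ≤ π / 2 * s := by
  obtain ⟨k, hk⟩ := exists_int_abs_sub_mul_pi_le (2 * θ)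
  have hdist : |2 * θ - k * π| = 2 * |θ - k * (π / 2)| := by
    rw [← abs_two, ← abs_mul]; ring_nf
  have hsin : |sin (2 * θ)| = 2 * |cos θ * sin θ| := by
    rw [sin_two_mul, mul_assoc, abs_mul, abs_two, mul_comm (sin θ)]
  have hnear : 2 * |θ - k * (π / 2)| ≤ 2 * (π / 2 * s) :=
    calc 2 * |θ - k * (π / 2)| ≤ π / 2 * (2 * |cos θ * sin θ|) := by rw [← hdist, ← hsin]; exact hk
      _ ≤ 2 * (π / 2 * s) := by nlinarith [pi_pos]
  have hquarter : 2 * |θ - k * (π / 2)| ≤ 2 * (π / 4) :=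
    calc 2 * |θ - k * (π / 2)| ≤ π / 2 * |sin (2 * θ)| := by rw [← hdist]; exact hk
      _ ≤ 2 * (π / 4) := by nlinarith [pi_pos, abs_sin_le_one (2 * θ)]
  obtain ⟨hθl, hθr⟩ := hθ
  obtain ⟨hq₁, hq₂⟩ := abs_le.mp (le_of_mul_le_mul_left hquarter two_pos)
  have hk3 : -3 < (k : ℝ) ∧ (k : ℝ) < 3 := ⟨by nlinarith [pi_pos], by nlinarith [pi_pos]⟩
  have hk3' : -3 < k ∧ k < 3 := by exact_mod_cast hk3
  exact ⟨k, by omega, by omega, le_of_mul_le_mul_left hnear two_pos⟩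

lemma volume_abs_cos_mul_sin_le {s : ℝ} (hs : 0 ≤ s) :
    volume {θ ∈ Ioo (-π) π | |cos θ * sin θ| ≤ s} ≤ ENNReal.ofReal (4 * π * s) := by
  set w := π / 2 * s with hw_def
  have hw : 0 ≤ w := by positivity
  have hcover : {θ ∈ Ioo (-π) π | |cos θ * sin θ| ≤ s} ⊆
      Ioc (-π) (-π + w) ∪ Icc (-(π / 2) - w) (-(π / 2) + w) ∪ Icc (-w) w ∪
        Icc (π / 2 - w) (π / 2 + w) ∪ Ico (π - w) π := by
    rintro θ ⟨hθ, hθs⟩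
    obtain ⟨k, hk₁, hk₂, hnear⟩ := exists_int_abs_sub_mul_pi_div_two_le hθ hθs
    rw [← hw_def] at hnear
    obtain ⟨hn₁, hn₂⟩ := abs_le.mp hnear
    obtain ⟨hθl, hθr⟩ := hθ
    interval_cases k <;> push_cast at hn₁ hn₂ <;>
      simp only [mem_union, mem_Ioc, mem_Icc, mem_Ico]
    · exact Or.inl (Or.inl (Or.inl (Or.inl ⟨hθl, by linarith⟩)))
    · exact Or.inl (Or.inl (Or.inl (Or.inr ⟨by linarith, by linarith⟩)))
    · exact Or.inl (Or.inl (Or.inr ⟨by linarith, by linarith⟩))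
    · exact Or.inl (Or.inr ⟨by linarith, by linarith⟩)
    · exact Or.inr ⟨by linarith, hθr⟩
  calc volume {θ ∈ Ioo (-π) π | |cos θ * sin θ| ≤ s}
      ≤ volume (Ioc (-π) (-π + w)) + volume (Icc (-(π / 2) - w) (-(π / 2) + w)) +
          volume (Icc (-w) w) + volume (Icc (π / 2 - w) (π / 2 + w)) + volume (Ico (π - w) π) :=
        (measure_mono hcover).trans <| (measure_union_le _ _).trans <| add_le_add_left
          ((measure_union_le _ _).trans <| add_le_add_left
            ((measure_union_le _ _).trans <| add_le_add_left (measure_union_le _ _) _) _) _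
    _ = ENNReal.ofReal (4 * π * s) := by
        simp only [volume_Ioc, volume_Icc, volume_Ico]
        rw [← ENNReal.ofReal_add, ← ENNReal.ofReal_add, ← ENNReal.ofReal_add,
          ← ENNReal.ofReal_add]
        · congr 1; ring
        all_goals linarith

lemma volume_polar_abs_mul_le_min {r t : ℝ} (hr : 0 < r) (ht : 0 ≤ t) :
    volume {θ ∈ Ioo (-π) π | (r * cos θ, r * sin θ) ∈ {p : ℝ × ℝ | |p.1 * p.2| ≤ t}} ≤
      ENNReal.ofReal (2 * π * min 1 (t / (r ^ 2 / 2))) := by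
  rw [mul_min_of_nonneg _ _ two_pi_pos.le, ENNReal.ofReal_min, mul_one]
  refine le_min ((measure_mono (sep_subset _ _)).trans_eq ?_) ?_
  · rw [volume_Ioo]; congr 1; ring
  have hset : {θ ∈ Ioo (-π) π | (r * cos θ, r * sin θ) ∈ {p : ℝ × ℝ | |p.1 * p.2| ≤ t}} =
      {θ ∈ Ioo (-π) π | |cos θ * sin θ| ≤ t / r ^ 2} := by
    ext θ
    simp only [mem_ofPred_eq, le_div_iff₀ (pow_pos hr 2)]
    rw [show r * cos θ * (r * sin θ) = cos θ * sin θ * r ^ 2 by ring, abs_mul,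
      abs_of_pos (pow_pos hr 2)]
  rw [hset]
  refine (volume_abs_cos_mul_sin_le (by positivity)).trans_eq ?_
  congr 1; field_simp; ring

lemma gaussianPDF_mul_gaussianPDF (x y : ℝ) :
    gaussianPDF 0 1 x * gaussianPDF 0 1 y =
      ENNReal.ofReal (exp (-(x ^ 2 + y ^ 2) / 2) / (2 * π)) := by
  rw [gaussianPDF, gaussianPDF, ← ENNReal.ofReal_mul (gaussianPDFReal_nonneg 0 1 x)]
  congr 1
  simp only [gaussianPDFReal, NNReal.coe_one, mul_one, sub_zero]
  rw [mul_mul_mul_comm, ← mul_inv, mul_self_sqrt (by positivity), ← exp_add]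
  ring_nf

lemma gaussianReal_prod_apply_eq_lintegral_polar {S : Set (ℝ × ℝ)} (hS : MeasurableSet S) :
    (gaussianReal 0 1).prod (gaussianReal 0 1) S =
      ∫⁻ r in Ioi 0, ENNReal.ofReal (r * exp (-(r ^ 2 / 2)) / (2 * π)) *
        volume {θ ∈ Ioo (-π) π | (r * cos θ, r * sin θ) ∈ S} := by
  rw [gaussianReal_of_var_ne_zero 0 one_ne_zero, prod_withDensity (measurable_gaussianPDF 0 1)
    (measurable_gaussianPDF 0 1), ← Measure.volume_eq_prod, withDensity_apply _ hS,
    ← lintegral_indicator hS, ← lintegral_comp_polarCoord_symm]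
  rw [show polarCoord.target = Ioi 0 ×ˢ Ioo (-π) π from rfl, Measure.volume_eq_prod,
    ← Measure.prod_restrict, lintegral_prod _ ?_]
  · refine setLIntegral_congr_fun measurableSet_Ioi fun r hr => ?_
    have hpolar : ∀ θ, ENNReal.ofReal r •
        S.indicator (fun p => gaussianPDF 0 1 p.1 * gaussianPDF 0 1 p.2) (polarCoord.symm (r, θ)) =
        {θ | (r * cos θ, r * sin θ) ∈ S}.indicator
          (fun _ => ENNReal.ofReal (r * exp (-(r ^ 2 / 2)) / (2 * π))) θ := by
      intro θ
      rw [polarCoord_symm_apply]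
      by_cases h : (r * cos θ, r * sin θ) ∈ S
      · rw [indicator_of_mem h,
          indicator_of_mem (show θ ∈ {θ | (r * cos θ, r * sin θ) ∈ S} from h), smul_eq_mul,
          gaussianPDF_mul_gaussianPDF, ← ENNReal.ofReal_mul hr.le]
        congr 1
        rw [mul_pow, mul_pow, ← mul_add, cos_sq_add_sin_sq, mul_one, neg_div, mul_div_assoc]
      · rw [indicator_of_notMem h,
          indicator_of_notMem (show θ ∉ {θ | (r * cos θ, r * sin θ) ∈ S} from h), smul_zero]
    simp_rw [hpolar]
    rw [lintegral_indicator_const, Measure.restrict_apply, inter_comm]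
    · rfl
    all_goals exact hS.preimage (by fun_prop)
  · exact (ENNReal.measurable_ofReal.comp measurable_fst).smul
      ((Measurable.indicator (by fun_prop) hS).comp (by fun_prop)) |>.aemeasurable

lemma lintegral_Ioi_mul_comp_sq_div_two (g : ℝ → ℝ≥0∞) :
    ∫⁻ r in Ioi 0, ENNReal.ofReal r * g (r ^ 2 / 2) = ∫⁻ z in Ioi 0, g z := by
  have himage : (fun r : ℝ => r ^ 2 / 2) '' Ioi 0 = Ioi 0 := by
    refine (image_subset_iff.mpr fun r (hr : 0 < r) => ?_).antisymm
      fun z (hz : 0 < z) => ⟨√(2 * z), sqrt_pos.mpr (by positivity), ?_⟩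
    · simp only [mem_preimage, mem_Ioi]; positivity
    · simp only [sq_sqrt (by positivity : 0 ≤ 2 * z)]; ring
  have hinj : InjOn (fun r : ℝ => r ^ 2 / 2) (Ioi 0) :=
    fun x (hx : 0 < x) y (hy : 0 < y) hxy => by simpa [hx.le, hy.le] using hxy
  conv_rhs => rw [← himage, lintegral_image_eq_lintegral_abs_deriv_mul measurableSet_Ioi
    (fun r _ => ((hasDerivAt_pow 2 r).div_const 2).hasDerivWithinAt) hinj]
  refine setLIntegral_congr_fun measurableSet_Ioi fun r (hr : 0 < r) => ?_
  norm_num [abs_of_pos hr]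

lemma hasDerivAt_log_sub_log_add_one {z : ℝ} (hz : 0 < z) :
    HasDerivAt (fun z => log z - log (z + 1)) (z⁻¹ - (z + 1)⁻¹) z := by
  have := ((hasDerivAt_id z).add_const 1).log (by simp; linarith)
  simpa using (hasDerivAt_log hz.ne').fun_sub this

lemma tendsto_log_sub_log_add_one : Tendsto (fun z : ℝ => log z - log (z + 1)) atTop (𝓝 0) := by
  simpa using (tendsto_log_comp_add_sub_log 1).neg

lemma inv_sub_inv_add_one_nonneg {z : ℝ} (hz : 0 < z) : 0 ≤ z⁻¹ - (z + 1)⁻¹ :=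
  sub_nonneg.mpr (inv_anti₀ hz (by linarith))

lemma integrableOn_Ioi_inv_sub_inv_add_one {t : ℝ} (ht : 0 < t) :
    IntegrableOn (fun z => z⁻¹ - (z + 1)⁻¹) (Ioi t) :=
  integrableOn_Ioi_deriv_of_nonneg' (fun _ hz => hasDerivAt_log_sub_log_add_one (ht.trans_le hz))
    (fun _ hz => inv_sub_inv_add_one_nonneg (ht.trans hz)) tendsto_log_sub_log_add_one

lemma integral_Ioi_inv_sub_inv_add_one {t : ℝ} (ht : 0 < t) :
    ∫ z in Ioi t, (z⁻¹ - (z + 1)⁻¹) = log (1 + 1 / t) := by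
  rw [integral_Ioi_of_hasDerivAt_of_nonneg'
    (fun _ hz => hasDerivAt_log_sub_log_add_one (ht.trans_le hz))
    (fun _ hz => inv_sub_inv_add_one_nonneg (ht.trans hz)) tendsto_log_sub_log_add_one,
    show 1 + 1 / t = (t + 1) / t by field_simp, log_div (by linarith) ht.ne']
  ring

lemma inv_mul_exp_neg_le {z : ℝ} (hz : 0 < z) : z⁻¹ * exp (-z) ≤ z⁻¹ - (z + 1)⁻¹ := by
  have hexp : exp (-z) ≤ (z + 1)⁻¹ := by
    rw [exp_neg]; exact inv_anti₀ (by linarith) (by linarith [add_one_le_exp z])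
  calc z⁻¹ * exp (-z) ≤ z⁻¹ * (z + 1)⁻¹ := by gcongr
    _ = z⁻¹ - (z + 1)⁻¹ := by field_simp; ring

lemma integrableOn_Ioi_inv_mul_exp_neg {t : ℝ} (ht : 0 < t) :
    IntegrableOn (fun z => z⁻¹ * exp (-z)) (Ioi t) := by
  refine (integrableOn_Ioi_inv_sub_inv_add_one ht).mono' (by fun_prop) ?_
  filter_upwards [ae_restrict_mem measurableSet_Ioi] with z (hz : t < z)
  have hz0 : 0 < z := ht.trans hz
  rw [norm_of_nonneg (by positivity)]
  exact inv_mul_exp_neg_le hz0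

lemma integral_Ioi_inv_mul_exp_neg_le_log {t : ℝ} (ht : 0 < t) :
    ∫ z in Ioi t, z⁻¹ * exp (-z) ≤ log (1 + 1 / t) := by
  rw [← integral_Ioi_inv_sub_inv_add_one ht]
  exact setIntegral_mono_on (integrableOn_Ioi_inv_mul_exp_neg ht)
    (integrableOn_Ioi_inv_sub_inv_add_one ht) measurableSet_Ioi
    fun z (hz : t < z) => inv_mul_exp_neg_le (ht.trans hz)

lemma integral_Ioc_exp_neg {t : ℝ} (ht : 0 ≤ t) : ∫ z in Ioc 0 t, exp (-z) = 1 - exp (-t) := by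
  rw [← intervalIntegral.integral_of_le ht, intervalIntegral.integral_comp_neg, integral_exp]
  simp

lemma lintegral_Ioi_exp_neg_mul_min_le {t : ℝ} (ht : 0 < t) :
    ∫⁻ z in Ioi 0, ENNReal.ofReal (exp (-z) * min 1 (t / z)) ≤
      ENNReal.ofReal (1 - exp (-t) + t * ∫ z in Ioi t, z⁻¹ * exp (-z)) := by
  have hhead : 0 ≤ 1 - exp (-t) := by
    linarith [exp_le_one_iff.mpr (neg_nonpos.mpr ht.le)]
  have htail : 0 ≤ t * ∫ z in Ioi t, z⁻¹ * exp (-z) :=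
    mul_nonneg ht.le (setIntegral_nonneg measurableSet_Ioi fun z (hz : t < z) =>
      have := ht.trans hz; by positivity)
  have hhead_int : IntegrableOn (fun z => exp (-z)) (Ioc 0 t) :=
    (exp_neg_integrableOn_Ioi 0 one_pos).mono_set Ioc_subset_Ioi_self |>.congr_fun
      (fun z _ => by simp) measurableSet_Ioc
  calc ∫⁻ z in Ioi 0, ENNReal.ofReal (exp (-z) * min 1 (t / z))
      ≤ (∫⁻ z in Ioc 0 t, ENNReal.ofReal (exp (-z) * min 1 (t / z))) +
          ∫⁻ z in Ioi t, ENNReal.ofReal (exp (-z) * min 1 (t / z)) := by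
        rw [← Ioc_union_Ioi_eq_Ioi ht.le]; apply lintegral_union_le
    _ ≤ (∫⁻ z in Ioc 0 t, ENNReal.ofReal (exp (-z))) +
          ∫⁻ z in Ioi t, ENNReal.ofReal (t * (z⁻¹ * exp (-z))) := by
        refine add_le_add (setLIntegral_mono' measurableSet_Ioc fun z _ => ?_)
          (setLIntegral_mono' measurableSet_Ioi fun z _ => ?_) <;>
          refine ENNReal.ofReal_le_ofReal ?_
        · exact mul_le_of_le_one_right (exp_pos _).le (min_le_left _ _)
        · calc exp (-z) * min 1 (t / z) ≤ exp (-z) * (t / z) := by gcongr; exact min_le_right _ _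
            _ = t * (z⁻¹ * exp (-z)) := by ring
    _ = ENNReal.ofReal (1 - exp (-t) + t * ∫ z in Ioi t, z⁻¹ * exp (-z)) := by
        rw [ENNReal.ofReal_add hhead htail, ← integral_Ioc_exp_neg ht.le, ← integral_const_mul,
          ofReal_integral_eq_lintegral_ofReal hhead_int (ae_of_all _ fun z => (exp_pos _).le),
          ofReal_integral_eq_lintegral_ofReal ((integrableOn_Ioi_inv_mul_exp_neg ht).const_mul t)]
        filter_upwards [ae_restrict_mem measurableSet_Ioi] with z (hz : t < z)
        have := ht.trans hz; positivity

/-- for `u, v` independent standard Gaussians and `t > 0`,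
`P[|uv| ≤ t] ≤ (1 − e^{−t}) + t ∫_t^∞ z⁻¹ e^{−z} dz ≤ t(1 + ln(1 + 1/t))`. -/
theorem gaussian_product_small_ball (t : ℝ) (ht : 0 < t) :
    ((gaussianReal 0 1).prod (gaussianReal 0 1)) {p : ℝ × ℝ | |p.1 * p.2| ≤ t}
        ≤ ENNReal.ofReal
          ((1 - Real.exp (-t)) + t * ∫ z in Set.Ioi t, z⁻¹ * Real.exp (-z)) ∧
      (1 - Real.exp (-t)) + t * (∫ z in Set.Ioi t, z⁻¹ * Real.exp (-z))
        ≤ t * (1 + Real.log (1 + 1 / t)) := by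
  refine ⟨?_, ?_⟩
  · calc _ = ∫⁻ r in Ioi 0, ENNReal.ofReal (r * exp (-(r ^ 2 / 2)) / (2 * π)) *
            volume {θ ∈ Ioo (-π) π | (r * cos θ, r * sin θ) ∈ {p : ℝ × ℝ | |p.1 * p.2| ≤ t}} :=
          gaussianReal_prod_apply_eq_lintegral_polar
            (measurableSet_le (by fun_prop) measurable_const)
      _ ≤ ∫⁻ r in Ioi 0, ENNReal.ofReal r *
            ENNReal.ofReal (exp (-(r ^ 2 / 2)) * min 1 (t / (r ^ 2 / 2))) := by
          refine setLIntegral_mono' measurableSet_Ioi fun r (hr : 0 < r) => ?_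
          calc _ ≤ ENNReal.ofReal (r * exp (-(r ^ 2 / 2)) / (2 * π)) *
                ENNReal.ofReal (2 * π * min 1 (t / (r ^ 2 / 2))) := by
                gcongr; exact volume_polar_abs_mul_le_min hr ht.le
            _ = _ := by
                rw [← ENNReal.ofReal_mul (by positivity), ← ENNReal.ofReal_mul hr.le]
                congr 1; field_simp
      _ = ∫⁻ z in Ioi 0, ENNReal.ofReal (exp (-z) * min 1 (t / z)) :=
          lintegral_Ioi_mul_comp_sq_div_two fun z => ENNReal.ofReal (exp (-z) * min 1 (t / z))
      _ ≤ _ := lintegral_Ioi_exp_neg_mul_min_le ht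
  · have hhead : 1 - exp (-t) ≤ t := by linarith [add_one_le_exp (-t)]
    have htail := mul_le_mul_of_nonneg_left (integral_Ioi_inv_mul_exp_neg_le_log ht) ht.le
    linarith
end
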